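/- arXiv:1312.7035 — 5 statements merged into one kernel-verified Lean document; each statement's English description precedes it below -/
import Mathlib

section
/- Let φ₁, φ₂ ∈ L²(π). Then ‖Tφ₁ − Tφ₂‖_π ≤ α ‖φ₁ − φ₂‖_π; that is, the Bellman operator T is an α-contraction on L²(π) with respect to the L²-norm induced by the invariant measure π. -/
open MeasureTheory ProbabilityTheory

open scoped ENNReal

/-!
By invariance of `π`, integrating `∫ g dκ(x)` against `π` gives back `∫ g dπ`, and Jensen's
inequality for the probability measures `κ(x)` bounds `(∫ ψ dκ(x))²` by `∫ ψ² dκ(x)`. Together they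
make the Markov operator `ψ ↦ ∫ ψ dκ(·)` a contraction of `L²(π)`, and `Tφ₁ - Tφ₂` is `α` times
this operator applied to `φ₁ - φ₂`.
-/

section Jensen

variable {α E : Type*} [MeasurableSpace α] [NormedAddCommGroup E] [NormedSpace ℝ E]

theorem enorm_integral_rpow_le_lintegral_enorm_rpow (μ : Measure α) [IsProbabilityMeasure μ]
    {f : α → E} (hf : AEStronglyMeasurable f μ) {p : ℝ} (hp : 1 ≤ p) :
    ‖∫ x, f x ∂μ‖ₑ ^ p ≤ ∫⁻ x, ‖f x‖ₑ ^ p ∂μ := by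
  have hp0 : 0 < p := one_pos.trans_le hp
  calc ‖∫ x, f x ∂μ‖ₑ ^ p ≤ eLpNorm' f 1 μ ^ p := by
        gcongr
        simpa [eLpNorm'] using enorm_integral_le_lintegral_enorm f
    _ ≤ eLpNorm' f p μ ^ p := by
        gcongr
        exact eLpNorm'_le_eLpNorm'_of_exponent_le one_pos hp μ hf
    _ = ∫⁻ x, ‖f x‖ₑ ^ p ∂μ := (lintegral_rpow_enorm_eq_rpow_eLpNorm' hp0).symm

end Jensen

theorem integral_sq_eq_toReal_lintegral_enorm_sq {α : Type*} [MeasurableSpace α] {μ : Measure α}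
    {g : α → ℝ} (hg : AEStronglyMeasurable g μ) :
    ∫ x, g x ^ 2 ∂μ = (∫⁻ x, ‖g x‖ₑ ^ 2 ∂μ).toReal := by
  simpa [sq_abs, enorm_pow] using integral_norm_eq_lintegral_enorm (hg.pow 2)

namespace ProbabilityTheory.Kernel

variable {α E : Type*} [MeasurableSpace α] [NormedAddCommGroup E] {κ : Kernel α α} {μ : Measure α}

theorem Invariant.lintegral_lintegral (hκ : κ.Invariant μ) {f : α → ℝ≥0∞} (hf : Measurable f) :
    ∫⁻ x, ∫⁻ y, f y ∂κ x ∂μ = ∫⁻ y, f y ∂μ := by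
  conv_rhs => rw [← hκ.def]
  exact (Measure.lintegral_bind κ.measurable.aemeasurable hf.aemeasurable).symm

theorem Invariant.ae_integrable (hκ : κ.Invariant μ) {f : α → E} (hf : StronglyMeasurable f)
    (hfi : Integrable f μ) : ∀ᵐ x ∂μ, Integrable f (κ x) := by
  have hfin : ∫⁻ x, ∫⁻ y, ‖f y‖ₑ ∂κ x ∂μ ≠ ∞ := by
    rw [hκ.lintegral_lintegral hf.enorm]
    exact hfi.hasFiniteIntegral.ne
  filter_upwards [ae_lt_top hf.enorm.lintegral_kernel hfin] with x hx
  exact ⟨hf.aestronglyMeasurable, hx⟩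

variable [NormedSpace ℝ E]

theorem Invariant.lintegral_enorm_integral_rpow_le [IsMarkovKernel κ] (hκ : κ.Invariant μ)
    {f : α → E} (hf : StronglyMeasurable f) {p : ℝ} (hp : 1 ≤ p) :
    ∫⁻ x, ‖∫ y, f y ∂κ x‖ₑ ^ p ∂μ ≤ ∫⁻ y, ‖f y‖ₑ ^ p ∂μ :=
  calc ∫⁻ x, ‖∫ y, f y ∂κ x‖ₑ ^ p ∂μ ≤ ∫⁻ x, ∫⁻ y, ‖f y‖ₑ ^ p ∂κ x ∂μ :=
        lintegral_mono fun x ↦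
          enorm_integral_rpow_le_lintegral_enorm_rpow (κ x) hf.aestronglyMeasurable hp
    _ = ∫⁻ y, ‖f y‖ₑ ^ p ∂μ := hκ.lintegral_lintegral (hf.enorm.pow_const p)

theorem Invariant.integral_sq_integral_le [IsMarkovKernel κ] (hκ : κ.Invariant μ)
    {f : α → ℝ} (hf : Measurable f) (hf2 : Integrable (fun x ↦ f x ^ 2) μ) :
    ∫ x, (∫ y, f y ∂κ x) ^ 2 ∂μ ≤ ∫ x, f x ^ 2 ∂μ := by
  have hfin : ∫⁻ x, ‖f x‖ₑ ^ 2 ∂μ ≠ ∞ := by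
    simpa only [enorm_pow] using hf2.hasFiniteIntegral.ne
  rw [integral_sq_eq_toReal_lintegral_enorm_sq hf.aestronglyMeasurable,
    integral_sq_eq_toReal_lintegral_enorm_sq
      (hf.stronglyMeasurable.integral_kernel (κ := κ)).aestronglyMeasurable]
  refine ENNReal.toReal_mono hfin ?_
  simpa only [ENNReal.rpow_two] using
    hκ.lintegral_enorm_integral_rpow_le hf.stronglyMeasurable one_le_two

end ProbabilityTheory.Kernel

theorem bellman_operator_contraction_general
    {𝒳 : Type*} [MeasurableSpace 𝒳]
    (κ : Kernel 𝒳 𝒳) [IsMarkovKernel κ]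
    (π : Measure 𝒳) [IsProbabilityMeasure π]
    (hinv : ∀ B : Set 𝒳, MeasurableSet B → π B = ∫⁻ x, κ x B ∂π)
    (α : ℝ) (hα0 : 0 < α)
    (r : 𝒳 → ℝ)
    (φ₁ φ₂ : 𝒳 → ℝ) (hφ₁ : Measurable φ₁) (hφ₂ : Measurable φ₂)
    (hφ₁2 : Integrable (fun x => φ₁ x ^ 2) π)
    (hφ₂2 : Integrable (fun x => φ₂ x ^ 2) π) :
    Real.sqrt (∫ x, ((r x + α * ∫ y, φ₁ y ∂(κ x)) - (r x + α * ∫ y, φ₂ y ∂(κ x))) ^ 2 ∂π)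
      ≤ α * Real.sqrt (∫ x, (φ₁ x - φ₂ x) ^ 2 ∂π) := by
  have hκ : κ.Invariant π := by
    ext B hB
    rw [Measure.bind_apply hB κ.measurable.aemeasurable, ← hinv B hB]
  have hφ₁L2 : MemLp φ₁ 2 π := (memLp_two_iff_integrable_sq hφ₁.aestronglyMeasurable).2 hφ₁2
  have hφ₂L2 : MemLp φ₂ 2 π := (memLp_two_iff_integrable_sq hφ₂.aestronglyMeasurable).2 hφ₂2
  have hψ2 : Integrable (fun x ↦ (φ₁ x - φ₂ x) ^ 2) π :=
    (memLp_two_iff_integrable_sq (hφ₁.sub hφ₂).aestronglyMeasurable).1 (hφ₁L2.sub hφ₂L2)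
  have hdiff : ∀ᵐ x ∂π, (∫ y, φ₁ y ∂κ x) - ∫ y, φ₂ y ∂κ x = ∫ y, φ₁ y - φ₂ y ∂κ x := by
    filter_upwards [hκ.ae_integrable hφ₁.stronglyMeasurable (hφ₁L2.integrable one_le_two),
      hκ.ae_integrable hφ₂.stronglyMeasurable (hφ₂L2.integrable one_le_two)] with x h₁ h₂
    exact (integral_sub h₁ h₂).symm
  calc _ = Real.sqrt (∫ x, α ^ 2 * (∫ y, φ₁ y - φ₂ y ∂κ x) ^ 2 ∂π) := by
        congr 1
        refine integral_congr_ae ?_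
        filter_upwards [hdiff] with x hx
        rw [← hx]
        ring
    _ = α * Real.sqrt (∫ x, (∫ y, φ₁ y - φ₂ y ∂κ x) ^ 2 ∂π) := by
        rw [integral_const_mul, Real.sqrt_mul (sq_nonneg α), Real.sqrt_sq hα0.le]
    _ ≤ _ :=
        mul_le_mul_of_nonneg_left
          (Real.sqrt_le_sqrt (hκ.integral_sq_integral_le (hφ₁.sub hφ₂) hψ2)) hα0.le

/-- The Bellman operator `T φ x = r x + α ∫ φ(y) κ(x, dy)` is an `α`-contraction on
`L²(π)` when `π` is invariant under the Markov kernel `κ`. -/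
theorem bellman_operator_contraction
    {𝒳 : Type*} [MeasurableSpace 𝒳]
    (κ : Kernel 𝒳 𝒳) [IsMarkovKernel κ]
    (π : Measure 𝒳) [IsProbabilityMeasure π]
    (hinv : ∀ B : Set 𝒳, MeasurableSet B → π B = ∫⁻ x, κ x B ∂π)
    (α : ℝ) (hα0 : 0 < α) (hα1 : α < 1)
    (r : 𝒳 → ℝ) (hr : Measurable r)
    (hr2 : Integrable (fun x => r x ^ 2) π)
    (φ₁ φ₂ : 𝒳 → ℝ) (hφ₁ : Measurable φ₁) (hφ₂ : Measurable φ₂)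
    (hφ₁2 : Integrable (fun x => φ₁ x ^ 2) π)
    (hφ₂2 : Integrable (fun x => φ₂ x ^ 2) π) :
    Real.sqrt (∫ x, ((r x + α * ∫ y, φ₁ y ∂(κ x)) - (r x + α * ∫ y, φ₂ y ∂(κ x))) ^ 2 ∂π)
      ≤ α * Real.sqrt (∫ x, (φ₁ x - φ₂ x) ^ 2 ∂π) :=
  bellman_operator_contraction_general κ π hinv α hα0 r φ₁ φ₂ hφ₁ hφ₂ hφ₁2 hφ₂2
end

section
/- Let C be a nonempty closed convex subset of the Hilbert space L²(π) and let Π_C denote the metric projection onto C. Then the map Π_C ∘ T has a unique fixed point V̄ ∈ C (so V̄ = Π_C(T V̄)); moreover, for any V₀ ∈ C, the iterates defined by V_{k+1} = Π_C(T V_k) satisfy ‖V_k − V̄‖_π ≤ α^k ‖V₀ − V̄‖_π for all k ≥ 0. -/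
/-!
By Jensen, `‖∫ φ dκ(x, ·)‖^p ≤ ∫ ‖φ‖^p dκ(x, ·)` for the probability measures `κ(x, ·)`;
integrating in `x` against `π` and using `κ ∘ₘ π = π` shows that `φ ↦ ∫ φ(y) κ(·, dy)` does not
increase the `L^p(π)` norm, so `T` is an `α`-contraction of `L²(π)`. The metric projection onto a
convex set is `1`-Lipschitz by the variational inequality `⟪y - Π y, q - Π y⟫ ≤ 0`. Hence
`Π_C ∘ T` is an `α`-contraction of the complete space `L²(π)`, and Banach's fixed point theorem
gives the unique fixed point and the geometric convergence of the iterates.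
-/

open MeasureTheory ProbabilityTheory ENNReal RealInnerProductSpace

section KernelLp

variable {α β : Type*} [MeasurableSpace α] [MeasurableSpace β]

theorem enorm_integral_rpow_le_lintegral_enorm_rpow_s3 {E : Type*} [NormedAddCommGroup E]
    [NormedSpace ℝ E] (ν : Measure β) [IsProbabilityMeasure ν] {g : β → E}
    (hg : AEStronglyMeasurable g ν) {q : ℝ} (hq : 1 ≤ q) :
    ‖∫ y, g y ∂ν‖ₑ ^ q ≤ ∫⁻ y, ‖g y‖ₑ ^ q ∂ν := by
  calc ‖∫ y, g y ∂ν‖ₑ ^ q ≤ eLpNorm' g 1 ν ^ q := by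
        gcongr
        simpa [eLpNorm'_eq_lintegral_enorm] using enorm_integral_le_lintegral_enorm g
    _ ≤ eLpNorm' g q ν ^ q := by
        gcongr
        exact eLpNorm'_le_eLpNorm'_of_exponent_le one_pos hq ν hg
    _ = ∫⁻ y, ‖g y‖ₑ ^ q ∂ν :=
        (lintegral_rpow_enorm_eq_rpow_eLpNorm' (zero_lt_one.trans_le hq)).symm

theorem eLpNorm_integral_kernel_le_eLpNorm_comp {E : Type*} [NormedAddCommGroup E]
    [NormedSpace ℝ E] (κ : Kernel α β) [IsMarkovKernel κ] (μ : Measure α) {g : β → E}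
    (hg : StronglyMeasurable g) {p : ℝ≥0∞} (hp : 1 ≤ p) (hp_top : p ≠ ∞) :
    eLpNorm (fun x => ∫ y, g y ∂κ x) p μ ≤ eLpNorm g p (κ ∘ₘ μ) := by
  have hp0 : p ≠ 0 := (zero_lt_one.trans_le hp).ne'
  have hq : 1 ≤ p.toReal := by simpa using ENNReal.toReal_mono hp_top hp
  rw [eLpNorm_eq_lintegral_rpow_enorm_toReal hp0 hp_top,
    eLpNorm_eq_lintegral_rpow_enorm_toReal hp0 hp_top,
    Measure.lintegral_bind κ.aemeasurable (hg.enorm.pow_const _).aemeasurable]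
  gcongr with x
  exact enorm_integral_rpow_le_lintegral_enorm_rpow_s3 (κ x) hg.aestronglyMeasurable hq

theorem ae_memLp_kernel_of_memLp_comp {E : Type*} [NormedAddCommGroup E] (κ : Kernel α β)
    (μ : Measure α) {g : β → E} (hg : StronglyMeasurable g) {p : ℝ≥0∞} (hp0 : p ≠ 0)
    (hp_top : p ≠ ∞) (hgp : MemLp g p (κ ∘ₘ μ)) : ∀ᵐ x ∂μ, MemLp g p (κ x) := by
  have hmeas : Measurable fun y => ‖g y‖ₑ ^ p.toReal := hg.enorm.pow_const _
  have hfin := lintegral_rpow_enorm_lt_top_of_eLpNorm_lt_top hp0 hp_top hgp.2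
  rw [Measure.lintegral_bind κ.aemeasurable hmeas.aemeasurable] at hfin
  filter_upwards [ae_lt_top hmeas.lintegral_kernel hfin.ne] with x hx
  exact ⟨hg.aestronglyMeasurable, (eLpNorm_lt_top_iff_lintegral_rpow_enorm_lt_top hp0 hp_top).2 hx⟩

variable {κ : Kernel α β} [IsMarkovKernel κ] {μ : Measure α} {ν : Measure β}
  {p : ℝ≥0∞} [Fact (1 ≤ p)]

theorem ae_integral_kernel_coeFn_sub (hν : κ ∘ₘ μ = ν) (hp_top : p ≠ ∞) (φ ψ : Lp ℝ p ν) :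
    ∀ᵐ x ∂μ, ∫ y, (φ - ψ) y ∂κ x = ∫ y, φ y ∂κ x - ∫ y, ψ y ∂κ x := by
  have hp1 : 1 ≤ p := Fact.out
  have hp0 : p ≠ 0 := (zero_lt_one.trans_le hp1).ne'
  subst hν
  filter_upwards [
    ae_memLp_kernel_of_memLp_comp κ μ (Lp.stronglyMeasurable φ) hp0 hp_top (Lp.memLp φ),
    ae_memLp_kernel_of_memLp_comp κ μ (Lp.stronglyMeasurable ψ) hp0 hp_top (Lp.memLp ψ),
    Measure.ae_ae_of_ae_comp (Lp.coeFn_sub φ ψ)] with x hφ hψ hsub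
  rw [integral_congr_ae hsub, Pi.sub_def, integral_sub (hφ.integrable hp1) (hψ.integrable hp1)]

theorem norm_sub_le_of_ae_eq_affine_kernel (hν : κ ∘ₘ μ = ν) (hp_top : p ≠ ∞) {c : ℝ}
    (hc : 0 ≤ c) {r : α → ℝ} {φ ψ : Lp ℝ p ν} {Tφ Tψ : Lp ℝ p μ}
    (hφ : Tφ =ᵐ[μ] fun x => r x + c * ∫ y, φ y ∂κ x)
    (hψ : Tψ =ᵐ[μ] fun x => r x + c * ∫ y, ψ y ∂κ x) :
    ‖Tφ - Tψ‖ ≤ c * ‖φ - ψ‖ := by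
  have hdiff : ⇑(Tφ - Tψ) =ᵐ[μ] c • fun x => ∫ y, (φ - ψ) y ∂κ x := by
    filter_upwards [Lp.coeFn_sub Tφ Tψ, hφ, hψ, ae_integral_kernel_coeFn_sub hν hp_top φ ψ]
      with x hT hφx hψx hsub
    simp only [hT, Pi.sub_apply, hφx, hψx, Pi.smul_apply, smul_eq_mul, hsub]
    ring
  have hbound : ‖Tφ - Tψ‖ₑ ≤ ‖c‖ₑ * ‖φ - ψ‖ₑ := by
    rw [Lp.enorm_def, Lp.enorm_def, eLpNorm_congr_ae hdiff, eLpNorm_const_smul]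
    gcongr
    simpa only [hν] using
      eLpNorm_integral_kernel_le_eLpNorm_comp κ μ (Lp.stronglyMeasurable _) Fact.out hp_top
  rwa [← ofReal_norm, ← ofReal_norm, ← ofReal_norm, ← ENNReal.ofReal_mul (norm_nonneg _),
    ENNReal.ofReal_le_ofReal_iff (by positivity), Real.norm_of_nonneg hc] at hbound

end KernelLp

section MetricProjection

variable {F : Type*} [NormedAddCommGroup F] [InnerProductSpace ℝ F] {K : Set F}

theorem real_inner_sub_le_zero_of_forall_norm_sub_le (hK : Convex ℝ K) {u v : F} (hv : v ∈ K)
    (hmin : ∀ w ∈ K, ‖u - v‖ ≤ ‖u - w‖) : ∀ w ∈ K, ⟪u - v, w - v⟫ ≤ 0 := by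
  have : Nonempty K := ⟨⟨v, hv⟩⟩
  have hbdd : BddBelow (Set.range fun w : K => ‖u - w‖) :=
    ⟨0, by rintro _ ⟨w, rfl⟩; exact norm_nonneg _⟩
  exact (norm_eq_iInf_iff_real_inner_le_zero hK hv).1
    (le_antisymm (le_ciInf fun w => hmin w w.2) (ciInf_le hbdd ⟨v, hv⟩))

theorem lipschitzWith_one_of_forall_norm_sub_le (hK : Convex ℝ K) {P : F → F}
    (hP : ∀ y, P y ∈ K ∧ ∀ q ∈ K, ‖y - P y‖ ≤ ‖y - q‖) : LipschitzWith 1 P := by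
  refine LipschitzWith.of_dist_le_mul fun y z => ?_
  rw [NNReal.coe_one, one_mul, dist_eq_norm, dist_eq_norm]
  have hy := real_inner_sub_le_zero_of_forall_norm_sub_le hK (hP y).1 (hP y).2 (P z) (hP z).1
  have hz := real_inner_sub_le_zero_of_forall_norm_sub_le hK (hP z).1 (hP z).2 (P y) (hP y).1
  have hsq : ‖P y - P z‖ ^ 2 ≤ ⟪y - z, P y - P z⟫ := by
    rw [← real_inner_self_eq_norm_sq]
    simp only [inner_sub_left, inner_sub_right, real_inner_comm] at hy hz ⊢
    linarith
  nlinarith [real_inner_le_norm (y - z) (P y - P z), norm_nonneg (P y - P z),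
    norm_nonneg (y - z)]

end MetricProjection

theorem fixed_point_projection_general
    {𝒳 : Type*} [MeasurableSpace 𝒳]
    (κ : Kernel 𝒳 𝒳) [IsMarkovKernel κ]
    (π : Measure 𝒳)
    (hinv : ∀ B : Set 𝒳, MeasurableSet B → π B = ∫⁻ x, κ x B ∂π)
    (α : ℝ) (hα0 : 0 < α) (hα1 : α < 1)
    (r : 𝒳 → ℝ)
    (TL : Lp ℝ 2 π → Lp ℝ 2 π)
    (hTL : ∀ φ : Lp ℝ 2 π,
      (TL φ : 𝒳 → ℝ) =ᵐ[π] fun x => r x + α * ∫ y, (φ : 𝒳 → ℝ) y ∂(κ x))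
    (C : Set (Lp ℝ 2 π)) (hCconvex : Convex ℝ C)
    (P : Lp ℝ 2 π → Lp ℝ 2 π)
    (hP : ∀ y : Lp ℝ 2 π, P y ∈ C ∧ ∀ q ∈ C, ‖y - P y‖ ≤ ‖y - q‖) :
    (∃! Vbar : Lp ℝ 2 π, Vbar ∈ C ∧ P (TL Vbar) = Vbar) ∧
      ∀ Vbar : Lp ℝ 2 π, Vbar ∈ C → P (TL Vbar) = Vbar →
        ∀ V : ℕ → Lp ℝ 2 π, V 0 ∈ C → (∀ k : ℕ, V (k + 1) = P (TL (V k))) →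
          ∀ k : ℕ, ‖V k - Vbar‖ ≤ α ^ k * ‖V 0 - Vbar‖ := by
  have hπ : κ ∘ₘ π = π :=
    Measure.ext fun B hB => by rw [Measure.bind_apply hB κ.aemeasurable, hinv B hB]
  have hT : LipschitzWith α.toNNReal TL := LipschitzWith.of_dist_le_mul fun φ ψ => by
    rw [dist_eq_norm, dist_eq_norm, Real.coe_toNNReal _ hα0.le]
    exact norm_sub_le_of_ae_eq_affine_kernel hπ ENNReal.ofNat_ne_top hα0.le (hTL φ) (hTL ψ)
  have hf : ContractingWith α.toNNReal (P ∘ TL) :=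
    ⟨Real.toNNReal_lt_one.2 hα1,
      one_mul α.toNNReal ▸ (lipschitzWith_one_of_forall_norm_sub_le hCconvex hP).comp hT⟩
  have hfix : P (TL (hf.fixedPoint _)) = hf.fixedPoint _ := hf.fixedPoint_isFixedPt
  refine ⟨⟨hf.fixedPoint _, ⟨hfix ▸ (hP _).1, hfix⟩, fun V hV => hf.fixedPoint_unique hV.2⟩, ?_⟩
  intro Vbar _ hVbar V _ hV k
  have hVk : V k = (P ∘ TL)^[k] (V 0) := by
    induction k with
    | zero => rfl
    | succ k ih => rw [hV, ih, Function.iterate_succ_apply']; rfl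
  have hVbark : (P ∘ TL)^[k] Vbar = Vbar := Function.IsFixedPt.iterate (f := P ∘ TL) hVbar k
  have hdist := (hf.2.iterate k).dist_le_mul (V 0) Vbar
  rwa [dist_eq_norm, dist_eq_norm, ← hVk, hVbark, NNReal.coe_pow,
    Real.coe_toNNReal _ hα0.le] at hdist

/-- Let `C` be a nonempty closed convex subset of `L²(π)` with metric projection `P`, and let
`TL` be the Bellman operator `T φ = r + α ∫ φ(y) κ(·,dy)` acting on `L²(π)`, where `π` is
invariant under the Markov kernel `κ`. Then `P ∘ TL` has a unique fixed point `V̄ ∈ C`, and the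
iterates `V_{k+1} = P (TL (V_k))` satisfy `‖V_k − V̄‖ ≤ α^k ‖V₀ − V̄‖`. -/
theorem fixed_point_projection
    {𝒳 : Type*} [MeasurableSpace 𝒳]
    (κ : Kernel 𝒳 𝒳) [IsMarkovKernel κ]
    (π : Measure 𝒳) [IsProbabilityMeasure π]
    (hinv : ∀ B : Set 𝒳, MeasurableSet B → π B = ∫⁻ x, κ x B ∂π)
    (α : ℝ) (hα0 : 0 < α) (hα1 : α < 1)
    (r : 𝒳 → ℝ) (hr : Measurable r)
    (hr2 : Integrable (fun x => r x ^ 2) π)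
    (TL : Lp ℝ 2 π → Lp ℝ 2 π)
    (hTL : ∀ φ : Lp ℝ 2 π,
      (TL φ : 𝒳 → ℝ) =ᵐ[π] fun x => r x + α * ∫ y, (φ : 𝒳 → ℝ) y ∂(κ x))
    (C : Set (Lp ℝ 2 π)) (hCne : C.Nonempty) (hCclosed : IsClosed C) (hCconvex : Convex ℝ C)
    (P : Lp ℝ 2 π → Lp ℝ 2 π)
    (hP : ∀ y : Lp ℝ 2 π, P y ∈ C ∧ ∀ q ∈ C, ‖y - P y‖ ≤ ‖y - q‖) :
    (∃! Vbar : Lp ℝ 2 π, Vbar ∈ C ∧ P (TL Vbar) = Vbar) ∧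
      ∀ Vbar : Lp ℝ 2 π, Vbar ∈ C → P (TL Vbar) = Vbar →
        ∀ V : ℕ → Lp ℝ 2 π, V 0 ∈ C → (∀ k : ℕ, V (k + 1) = P (TL (V k))) →
          ∀ k : ℕ, ‖V k - Vbar‖ ≤ α ^ k * ‖V 0 - Vbar‖ :=
  fixed_point_projection_general κ π hinv α hα0 hα1 r TL hTL C hCconvex P hP
end

section
/- Let μ be the probability measure on 𝒳 × 𝒳 × 𝒳 obtained by drawing X ∼ π and then Y and Z independently from κ(X,·) (i.e., μ(dx,dy,dz) = π(dx) κ(x,dy) κ(x,dz)), and let C be a nonempty closed convex subset of L²(π) with metric projection Π_C. Then for every measurable V : 𝒳 → ℝ with ∫ V² dπ < ∞, the projection Π_C(TV) is the unique minimizer over φ ∈ C of the functional φ ↦ ∫ ( r(x) + (α/2)(V(y) + V(z)) − φ(x) )² μ(dx,dy,dz). -/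
/-!
Write `Y(x, y, z) = r(x) + (α/2)(V(y) + V(z))`. Given `x`, both `y` and `z` are drawn from
`κ(x, ·)`, so the conditional mean of `Y` given `x` is `(TV)(x)`; and since `π` is invariant,
`y` and `z` are `π`-distributed, which puts `Y` in `L²(μ)`. The residual `Y - TV(x)` is then
orthogonal to every function of `x`, so for `φ ∈ L²(π)` the loss splits as
`∫ (Y - φ(x))² dμ = ∫ (Y - TV(x))² dμ + ‖TV - φ‖²`. Minimizing the loss over `C` is therefore
minimizing the distance to `TV` over `C`, whose unique solution is `P(TV)`.
-/

open MeasureTheory ProbabilityTheory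

theorem eq_of_norm_sub_le_of_forall_norm_sub_le {E : Type*} [NormedAddCommGroup E]
    [InnerProductSpace ℝ E] {C : Set E} (hC : Convex ℝ C) {y a b : E} (ha : a ∈ C) (hb : b ∈ C)
    (ha_min : ∀ q ∈ C, ‖y - a‖ ≤ ‖y - q‖) (hb_le : ‖y - b‖ ≤ ‖y - a‖) : b = a := by
  set c : E := (1 / 2 : ℝ) • a + (1 / 2 : ℝ) • b
  have hc : c ∈ C := hC ha hb (by norm_num) (by norm_num) (by norm_num)
  -- the parallelogram law at the midpoint `c`: `4‖y - c‖² + ‖b - a‖² = 2‖y - a‖² + 2‖y - b‖²`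
  have hpar := parallelogram_law_with_norm ℝ (y - a) (y - b)
  rw [show (y - a) + (y - b) = (2 : ℝ) • (y - c) by module,
    show (y - a) - (y - b) = b - a by abel, norm_smul, Real.norm_two] at hpar
  have hac := ha_min c hc
  have : ‖b - a‖ * ‖b - a‖ ≤ 0 := by
    nlinarith [norm_nonneg (y - a), norm_nonneg (y - b), norm_nonneg (y - c)]
  exact sub_eq_zero.1 (norm_eq_zero.1 (by nlinarith [norm_nonneg (b - a)]))

theorem MeasureTheory.L2.norm_sub_sq_eq_integral {Ω : Type*} [MeasurableSpace Ω]
    {μ : Measure Ω} (f g : Lp ℝ 2 μ) : ‖f - g‖ ^ 2 = ∫ ω, (f ω - g ω) ^ 2 ∂μ := by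
  rw [← real_inner_self_eq_norm_sq, L2.inner_def]
  refine integral_congr_ae ?_
  filter_upwards [Lp.coeFn_sub f g] with ω hω
  rw [hω, Pi.sub_apply, real_inner_self_eq_norm_sq, Real.norm_eq_abs, sq_abs]

theorem integral_add_sq_of_integral_mul_eq_zero {Ω : Type*} [MeasurableSpace Ω]
    {μ : Measure Ω} {f g : Ω → ℝ} (hf : MemLp f 2 μ) (hg : MemLp g 2 μ)
    (hfg : ∫ ω, f ω * g ω ∂μ = 0) :
    ∫ ω, (f ω + g ω) ^ 2 ∂μ = ∫ ω, f ω ^ 2 ∂μ + ∫ ω, g ω ^ 2 ∂μ := by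
  have hf2 := hf.integrable_sq
  have hg2 := hg.integrable_sq
  have hfg2 : Integrable (fun ω => 2 * (f ω * g ω)) μ := (hf.integrable_mul hg).const_mul 2
  calc ∫ ω, (f ω + g ω) ^ 2 ∂μ
      = ∫ ω, (f ω ^ 2 + g ω ^ 2) + 2 * (f ω * g ω) ∂μ := by congr 1; ext ω; ring
    _ = ∫ ω, f ω ^ 2 ∂μ + ∫ ω, g ω ^ 2 ∂μ := by
      rw [integral_add (f := fun ω => f ω ^ 2 + g ω ^ 2) (hf2.add hg2) hfg2,
        integral_add hf2 hg2, integral_const_mul, hfg, mul_zero, add_zero]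

section CompProd

variable {α β γ : Type*} [MeasurableSpace α] [MeasurableSpace β] [MeasurableSpace γ]

theorem measurePreserving_fst_compProd (π : Measure α) [SFinite π] (η : Kernel α β)
    [IsMarkovKernel η] : MeasurePreserving Prod.fst (π ⊗ₘ η) π :=
  ⟨measurable_fst, Measure.fst_compProd π η⟩

theorem measurePreserving_compProd_prod_fst (π : Measure α) [SFinite π] (κ : Kernel α β)
    [IsSFiniteKernel κ] (η : Kernel α γ) [IsMarkovKernel η] :
    MeasurePreserving (fun p : α × β × γ => p.2.1) (π ⊗ₘ (κ ×ₖ η)) (κ ∘ₘ π) := by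
  refine ⟨measurable_fst.comp measurable_snd, ?_⟩
  change Measure.map (Prod.fst ∘ Prod.snd) _ = _
  rw [← Measure.map_map measurable_fst measurable_snd,
    show (π ⊗ₘ (κ ×ₖ η)).map Prod.snd = (κ ×ₖ η) ∘ₘ π from Measure.snd_compProd π _,
    Measure.map_comp _ _ measurable_fst, ← Kernel.fst_eq, Kernel.fst_prod]

theorem measurePreserving_compProd_prod_snd (π : Measure α) [SFinite π] (κ : Kernel α β)
    [IsMarkovKernel κ] (η : Kernel α γ) [IsSFiniteKernel η] :
    MeasurePreserving (fun p : α × β × γ => p.2.2) (π ⊗ₘ (κ ×ₖ η)) (η ∘ₘ π) := by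
  refine ⟨measurable_snd.comp measurable_snd, ?_⟩
  change Measure.map (Prod.snd ∘ Prod.snd) _ = _
  rw [← Measure.map_map measurable_snd measurable_snd,
    show (π ⊗ₘ (κ ×ₖ η)).map Prod.snd = (κ ×ₖ η) ∘ₘ π from Measure.snd_compProd π _,
    Measure.map_comp _ _ measurable_snd, ← Kernel.snd_eq, Kernel.snd_prod]

variable {π : Measure α} {η : Kernel α β}

theorem integral_compProd_mul_comp_fst_eq_zero [SFinite π] [IsSFiniteKernel η]
    {D : α × β → ℝ} {g : α → ℝ} (hDg : Integrable (fun p => D p * g p.1) (π ⊗ₘ η))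
    (hD : ∀ᵐ x ∂π, ∫ w, D (x, w) ∂η x = 0) :
    ∫ p, D p * g p.1 ∂(π ⊗ₘ η) = 0 := by
  rw [Measure.integral_compProd hDg]
  refine integral_eq_zero_of_ae ?_
  filter_upwards [hD] with x hx
  rw [integral_mul_const, hx, zero_mul, Pi.zero_apply]

theorem integral_compProd_sq_sub_comp_fst [IsFiniteMeasure π] [IsMarkovKernel η]
    {Y : α × β → ℝ} {m f : α → ℝ} (hY : MemLp Y 2 (π ⊗ₘ η)) (hm : MemLp m 2 π)
    (hf : MemLp f 2 π) (hYm : ∀ᵐ x ∂π, ∫ w, Y (x, w) ∂η x = m x) :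
    ∫ p, (Y p - f p.1) ^ 2 ∂(π ⊗ₘ η)
      = ∫ p, (Y p - m p.1) ^ 2 ∂(π ⊗ₘ η) + ∫ x, (m x - f x) ^ 2 ∂π := by
  have hfst := measurePreserving_fst_compProd π η
  have hD : MemLp (fun p => Y p - m p.1) 2 (π ⊗ₘ η) := hY.sub (hm.comp_measurePreserving hfst)
  have hG : MemLp (fun p => m p.1 - f p.1) 2 (π ⊗ₘ η) :=
    (hm.sub hf).comp_measurePreserving hfst
  have hY_sections : ∀ᵐ x ∂π, Integrable (fun w => Y (x, w)) (η x) :=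
    ((Measure.integrable_compProd_iff hY.1).1 (hY.integrable one_le_two)).1
  have hcross : ∫ p, (Y p - m p.1) * (m p.1 - f p.1) ∂(π ⊗ₘ η) = 0 := by
    refine integral_compProd_mul_comp_fst_eq_zero (g := fun x => m x - f x)
      (hD.integrable_mul hG) ?_
    filter_upwards [hYm, hY_sections] with x hx hYx
    rw [integral_sub hYx (integrable_const _), hx, integral_const, probReal_univ, one_smul,
      sub_self]
  have hG_sq : ∫ p, (m p.1 - f p.1) ^ 2 ∂(π ⊗ₘ η) = ∫ x, (m x - f x) ^ 2 ∂π := by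
    have h := integral_map (μ := π ⊗ₘ η) hfst.measurable.aemeasurable
      (f := fun x => (m x - f x) ^ 2) (hfst.map_eq ▸ (hm.sub hf).integrable_sq.1)
    rw [hfst.map_eq] at h
    exact h.symm
  calc ∫ p, (Y p - f p.1) ^ 2 ∂(π ⊗ₘ η)
      = ∫ p, ((Y p - m p.1) + (m p.1 - f p.1)) ^ 2 ∂(π ⊗ₘ η) := by simp_rw [sub_add_sub_cancel]
    _ = _ := by rw [integral_add_sq_of_integral_mul_eq_zero hD hG hcross, hG_sq]

theorem integral_prod_add_comp_fst_snd (μ ν : Measure β) [IsProbabilityMeasure μ]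
    [IsProbabilityMeasure ν] {V : β → ℝ} (hμ : Integrable V μ) (hν : Integrable V ν) :
    ∫ w, (V w.1 + V w.2) ∂(μ.prod ν) = ∫ y, V y ∂μ + ∫ y, V y ∂ν := by
  rw [integral_add (hμ.comp_fst ν) (hν.comp_snd μ), integral_fun_fst, integral_fun_snd]
  simp

end CompProd

namespace ProbabilityTheory.Kernel.Invariant

variable {𝒳 : Type*} [MeasurableSpace 𝒳] {κ : Kernel 𝒳 𝒳} [IsMarkovKernel κ] {π : Measure 𝒳}
  {r V : 𝒳 → ℝ}

theorem memLp_two_copy_target [SFinite π] (hκ : κ.Invariant π) (α : ℝ) (hr : MemLp r 2 π)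
    (hV : MemLp V 2 π) :
    MemLp (fun p : 𝒳 × 𝒳 × 𝒳 => r p.1 + α / 2 * (V p.2.1 + V p.2.2)) 2 (π ⊗ₘ (κ ×ₖ κ)) := by
  have hy := measurePreserving_compProd_prod_fst π κ κ
  have hz := measurePreserving_compProd_prod_snd π κ κ
  rw [hκ.def] at hy hz
  exact (hr.comp_measurePreserving (measurePreserving_fst_compProd π _)).add
    (((hV.comp_measurePreserving hy).add (hV.comp_measurePreserving hz)).const_mul _)

theorem ae_integral_two_copy_target (hκ : κ.Invariant π) (α : ℝ) (hV : Integrable V π) :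
    ∀ᵐ x ∂π, ∫ w, (r x + α / 2 * (V w.1 + V w.2)) ∂(κ ×ₖ κ) x = r x + α * ∫ y, V y ∂κ x := by
  rw [← hκ.def] at hV
  filter_upwards [Measure.ae_integrable_of_integrable_comp hV] with x hx
  have hsum : Integrable (fun w : 𝒳 × 𝒳 => V w.1 + V w.2) ((κ x).prod (κ x)) :=
    (hx.comp_fst _).add (hx.comp_snd _)
  rw [Kernel.prod_apply, integral_add (integrable_const _) (hsum.const_mul _), integral_const_mul, integral_prod_add_comp_fst_snd _ _ hx hx,
    MeasureTheory.integral_const, probReal_univ, one_smul]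
  ring

end ProbabilityTheory.Kernel.Invariant

theorem projection_of_bellman_is_two_copy_least_squares_general
    {𝒳 : Type*} [MeasurableSpace 𝒳]
    (κ : Kernel 𝒳 𝒳) [IsMarkovKernel κ]
    (π : Measure 𝒳) [IsProbabilityMeasure π]
    (hinv : ∀ B : Set 𝒳, MeasurableSet B → π B = ∫⁻ x, κ x B ∂π)
    (α : ℝ)
    (r : 𝒳 → ℝ) (hr : Measurable r)
    (hr2 : Integrable (fun x => r x ^ 2) π)
    (C : Set (Lp ℝ 2 π)) (hCconvex : Convex ℝ C)
    (P : Lp ℝ 2 π → Lp ℝ 2 π)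
    (hP : ∀ y : Lp ℝ 2 π, P y ∈ C ∧ ∀ q ∈ C, ‖y - P y‖ ≤ ‖y - q‖)
    (V : 𝒳 → ℝ) (hV : Measurable V) (hV2 : Integrable (fun x => V x ^ 2) π)
    (TV : Lp ℝ 2 π)
    (hTV : (TV : 𝒳 → ℝ) =ᵐ[π] fun x => r x + α * ∫ y, V y ∂(κ x)) :
    P TV ∈ C ∧
      (∀ φ ∈ C,
        ∫ p, (r p.1 + (α / 2) * (V p.2.1 + V p.2.2) - (P TV : 𝒳 → ℝ) p.1) ^ 2 ∂(π ⊗ₘ (κ ×ₖ κ))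
          ≤ ∫ p, (r p.1 + (α / 2) * (V p.2.1 + V p.2.2) - (φ : 𝒳 → ℝ) p.1) ^ 2
              ∂(π ⊗ₘ (κ ×ₖ κ))) ∧
      (∀ φ ∈ C,
        (∫ p, (r p.1 + (α / 2) * (V p.2.1 + V p.2.2) - (φ : 𝒳 → ℝ) p.1) ^ 2 ∂(π ⊗ₘ (κ ×ₖ κ)))
          ≤ ∫ p, (r p.1 + (α / 2) * (V p.2.1 + V p.2.2) - (P TV : 𝒳 → ℝ) p.1) ^ 2
              ∂(π ⊗ₘ (κ ×ₖ κ)) → φ = P TV) := by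
  have hκ : κ.Invariant π := Measure.ext fun B hB => by
    rw [Measure.bind_apply hB κ.aemeasurable, hinv B hB]
  have hrL2 : MemLp r 2 π := (memLp_two_iff_integrable_sq hr.aestronglyMeasurable).2 hr2
  have hVL2 : MemLp V 2 π := (memLp_two_iff_integrable_sq hV.aestronglyMeasurable).2 hV2
  have hmean : ∀ᵐ x ∂π, ∫ w, (r x + α / 2 * (V w.1 + V w.2)) ∂(κ ×ₖ κ) x = TV x := by
    filter_upwards [hκ.ae_integral_two_copy_target α (hVL2.integrable one_le_two), hTV]
      with x hx hTVx
    rw [hx, hTVx]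
  have hloss : ∀ φ : Lp ℝ 2 π,
      ∫ p, (r p.1 + (α / 2) * (V p.2.1 + V p.2.2) - φ p.1) ^ 2 ∂(π ⊗ₘ (κ ×ₖ κ))
        = ∫ p, (r p.1 + (α / 2) * (V p.2.1 + V p.2.2) - TV p.1) ^ 2 ∂(π ⊗ₘ (κ ×ₖ κ))
          + ‖TV - φ‖ ^ 2 := fun φ => by
    rw [integral_compProd_sq_sub_comp_fst (hκ.memLp_two_copy_target α hrL2 hVL2) (Lp.memLp TV)
      (Lp.memLp φ) hmean, L2.norm_sub_sq_eq_integral]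
  obtain ⟨hPC, hPmin⟩ := hP TV
  refine ⟨hPC, fun φ hφ => ?_, fun φ hφ hle => ?_⟩
  · rw [hloss φ, hloss (P TV)]
    gcongr
    exact hPmin φ hφ
  · rw [hloss φ, hloss (P TV), add_le_add_iff_left,
      pow_le_pow_iff_left₀ (norm_nonneg _) (norm_nonneg _) two_ne_zero] at hle
    exact eq_of_norm_sub_le_of_forall_norm_sub_le hCconvex hPC hφ hPmin hle

/-- With `μ(dx,dy,dz) = π(dx) κ(x,dy) κ(x,dz)` and `C` a nonempty closed convex subset of
`L²(π)` with metric projection `P`, for every `V ∈ L²(π)` the projection `P(TV)` of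
`TV = r + α ∫ V(y) κ(·,dy)` is the unique minimizer over `φ ∈ C` of
`φ ↦ ∫ (r(x) + (α/2)(V(y)+V(z)) − φ(x))² dμ`. -/
theorem projection_of_bellman_is_two_copy_least_squares
    {𝒳 : Type*} [MeasurableSpace 𝒳]
    (κ : Kernel 𝒳 𝒳) [IsMarkovKernel κ]
    (π : Measure 𝒳) [IsProbabilityMeasure π]
    (hinv : ∀ B : Set 𝒳, MeasurableSet B → π B = ∫⁻ x, κ x B ∂π)
    (α : ℝ) (hα0 : 0 < α) (hα1 : α < 1)
    (r : 𝒳 → ℝ) (hr : Measurable r)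
    (hr2 : Integrable (fun x => r x ^ 2) π)
    (C : Set (Lp ℝ 2 π)) (hCne : C.Nonempty) (hCclosed : IsClosed C) (hCconvex : Convex ℝ C)
    (P : Lp ℝ 2 π → Lp ℝ 2 π)
    (hP : ∀ y : Lp ℝ 2 π, P y ∈ C ∧ ∀ q ∈ C, ‖y - P y‖ ≤ ‖y - q‖)
    (V : 𝒳 → ℝ) (hV : Measurable V) (hV2 : Integrable (fun x => V x ^ 2) π)
    (TV : Lp ℝ 2 π)
    (hTV : (TV : 𝒳 → ℝ) =ᵐ[π] fun x => r x + α * ∫ y, V y ∂(κ x)) :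
    P TV ∈ C ∧
      (∀ φ ∈ C,
        ∫ p, (r p.1 + (α / 2) * (V p.2.1 + V p.2.2) - (P TV : 𝒳 → ℝ) p.1) ^ 2 ∂(π ⊗ₘ (κ ×ₖ κ))
          ≤ ∫ p, (r p.1 + (α / 2) * (V p.2.1 + V p.2.2) - (φ : 𝒳 → ℝ) p.1) ^ 2
              ∂(π ⊗ₘ (κ ×ₖ κ))) ∧
      (∀ φ ∈ C,
        (∫ p, (r p.1 + (α / 2) * (V p.2.1 + V p.2.2) - (φ : 𝒳 → ℝ) p.1) ^ 2 ∂(π ⊗ₘ (κ ×ₖ κ)))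
          ≤ ∫ p, (r p.1 + (α / 2) * (V p.2.1 + V p.2.2) - (P TV : 𝒳 → ℝ) p.1) ^ 2
              ∂(π ⊗ₘ (κ ×ₖ κ)) → φ = P TV) :=
  projection_of_bellman_is_two_copy_least_squares_general κ π hinv α r hr hr2 C hCconvex P hP V hV
    hV2 TV hTV
end

section
/- Let H be a real Hilbert space, f ∈ H, and let (C_n)_{n≥1} be a decreasing sequence (C_1 ⊇ C_2 ⊇ ⋯) of nonempty closed convex subsets of H. Let C be a nonempty closed convex subset of H with C ⊆ C_n for all n, and let g_n be the metric projection of f onto C_n. Then (g_n) is a Cauchy sequence, hence converges to some g_∞ ∈ H; moreover, if g_∞ ∈ C, then g_∞ is the metric projection of f onto C, i.e., ‖g_n − P_C f‖ → 0. -/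
/-- Let `(C_n)` be a decreasing sequence of nonempty closed convex subsets of a real Hilbert
space, `C` a nonempty closed convex set with `C ⊆ C_n` for all `n`, and `g_n` the metric
projection of `f` onto `C_n`. Then `(g_n)` is Cauchy, hence converges to some `g_∞`; moreover,
if `g_∞ ∈ C` then `g_∞` is the metric projection of `f` onto `C`, i.e. `‖g_n − P_C f‖ → 0`. -/
theorem nested_projections_cauchy_and_limit
    {H : Type*} [NormedAddCommGroup H] [InnerProductSpace ℝ H] [CompleteSpace H]
    (f : H) (Cn : ℕ → Set H)
    (hne : ∀ n, (Cn n).Nonempty) (hclosed : ∀ n, IsClosed (Cn n))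
    (hconvex : ∀ n, Convex ℝ (Cn n)) (hdec : ∀ n, Cn (n + 1) ⊆ Cn n)
    (C : Set H) (hCne : C.Nonempty) (hCclosed : IsClosed C) (hCconvex : Convex ℝ C)
    (hsub : ∀ n, C ⊆ Cn n)
    (g : ℕ → H) (hgK : ∀ n, g n ∈ Cn n)
    (hgmin : ∀ n, ∀ q ∈ Cn n, ‖f - g n‖ ≤ ‖f - q‖) :
    CauchySeq g ∧
      ∃ ginf : H, Filter.Tendsto g Filter.atTop (nhds ginf) ∧
        (ginf ∈ C → ∀ p : H, p ∈ C → (∀ q ∈ C, ‖f - p‖ ≤ ‖f - q‖) →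
          Filter.Tendsto (fun n => ‖g n - p‖) Filter.atTop (nhds 0)) := by
  obtain ⟨c, hc⟩ := hCne
  set D : ℕ → ℝ := fun n => ‖f - g n‖ with hD
  have hanti : Antitone Cn := antitone_nat_of_succ_le hdec
  have hDmono : Monotone D := by
    intro n m hnm
    exact hgmin n (g m) (hanti hnm (hgK m))
  have hDbd : ∀ n, D n ≤ ‖f - c‖ := fun n => hgmin n c (hsub n hc)
  -- key parallelogram estimate
  have key : ∀ n m, n ≤ m → ‖g m - g n‖ ^ 2 ≤ 2 * ((D m) ^ 2 - (D n) ^ 2) := by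
    intro n m hnm
    set mid : H := (1/2 : ℝ) • g n + (1/2 : ℝ) • g m with hmiddef
    have hmid : mid ∈ Cn n :=
      hconvex n (hgK n) (hanti hnm (hgK m)) (by norm_num) (by norm_num) (by norm_num)
    have hmid_ge : D n ≤ ‖f - mid‖ := hgmin n _ hmid
    have hpar := parallelogram_law_with_norm ℝ (f - g n) (f - g m)
    have hsum : (f - g n) + (f - g m) = (2 : ℝ) • (f - mid) := by
      rw [hmiddef]; module
    have hdiff : (f - g n) - (f - g m) = g m - g n := by abel
    have hnsum : ‖(f - g n) + (f - g m)‖ = 2 * ‖f - mid‖ := by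
      rw [hsum, norm_smul]; simp
    have h2 : (2 * D n) ^ 2 ≤ ‖(f - g n) + (f - g m)‖ ^ 2 := by
      rw [hnsum]
      nlinarith [hmid_ge, norm_nonneg (f - g n)]
    have hpar' : ‖(f - g n) + (f - g m)‖ ^ 2 + ‖g m - g n‖ ^ 2
        = 2 * ((D n) ^ 2 + (D m) ^ 2) := by
      rw [← hdiff]
      simpa [pow_two] using hpar
    nlinarith [h2, hpar']
  -- D^2 converges
  have hbddAbove : BddAbove (Set.range fun n => (D n) ^ 2) := by
    refine ⟨‖f - c‖ ^ 2, ?_⟩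
    rintro x ⟨n, rfl⟩
    have h1 := hDbd n
    have h0 : (0:ℝ) ≤ D n := norm_nonneg _
    dsimp only
    nlinarith
  have hmono2 : Monotone fun n => (D n) ^ 2 := by
    intro n m h
    have h0 : (0:ℝ) ≤ D n := norm_nonneg _
    have h1 := hDmono h
    dsimp only
    nlinarith
  have hconv : Filter.Tendsto (fun n => (D n) ^ 2) Filter.atTop
      (nhds (⨆ n, (D n) ^ 2)) := tendsto_atTop_ciSup hmono2 hbddAbove
  have hcau2 : CauchySeq fun n => (D n) ^ 2 := hconv.cauchySeq
  -- g is Cauchy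
  have hgcau : CauchySeq g := by
    rw [Metric.cauchySeq_iff']
    intro ε hε
    obtain ⟨N, hN⟩ := Metric.cauchySeq_iff'.mp hcau2 (ε ^ 2 / 2) (by positivity)
    refine ⟨N, fun n hn => ?_⟩
    have h1 := key N n hn
    have h2 := hN n hn
    rw [Real.dist_eq, abs_lt] at h2
    have h3 : ‖g n - g N‖ ^ 2 < ε ^ 2 := by nlinarith [h2.1, h2.2]
    rw [dist_eq_norm]
    nlinarith [norm_nonneg (g n - g N), h3, hε]
  obtain ⟨ginf, hginf⟩ := cauchySeq_tendsto_of_complete hgcau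
  refine ⟨hgcau, ginf, hginf, ?_⟩
  intro hginfC p hp hpmin
  have hDlim : Filter.Tendsto D Filter.atTop (nhds ‖f - ginf‖) :=
    (tendsto_const_nhds.sub hginf).norm
  have hle1 : ‖f - ginf‖ ≤ ‖f - p‖ :=
    le_of_tendsto hDlim (Filter.Eventually.of_forall fun n => hgmin n p (hsub n hp))
  have hle2 : ‖f - p‖ ≤ ‖f - ginf‖ := hpmin ginf hginfC
  have heqn : ‖f - ginf‖ = ‖f - p‖ := le_antisymm hle1 hle2
  -- uniqueness: ginf = p by midpoint argument
  set mid : H := (1/2 : ℝ) • ginf + (1/2 : ℝ) • p with hmiddef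
  have hmidC : mid ∈ C :=
    hCconvex hginfC hp (by norm_num) (by norm_num) (by norm_num)
  have hmid_ge : ‖f - p‖ ≤ ‖f - mid‖ := hpmin _ hmidC
  have hpar := parallelogram_law_with_norm ℝ (f - ginf) (f - p)
  have hsum : (f - ginf) + (f - p) = (2 : ℝ) • (f - mid) := by
    rw [hmiddef]; module
  have hnsum : ‖(f - ginf) + (f - p)‖ = 2 * ‖f - mid‖ := by
    rw [hsum, norm_smul]; simp
  have hdiff : (f - ginf) - (f - p) = p - ginf := by abel
  have hzero : p = ginf := by
    have hn : ‖p - ginf‖ = 0 := by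
      have hpge : ‖(f - ginf) - (f - p)‖ = ‖p - ginf‖ := by rw [hdiff]
      nlinarith [hpar, hnsum, hmid_ge, norm_nonneg (p - ginf), heqn,
        norm_nonneg (f - p), hpge]
    exact sub_eq_zero.mp (norm_eq_zero.mp hn)
  subst hzero
  have : Filter.Tendsto (fun n => g n - p) Filter.atTop (nhds 0) := by
    simpa using hginf.sub (tendsto_const_nhds (x := p))
  simpa using this.norm
end

section
/- Suppose r : 𝒳 → ℝ is bounded and measurable and there is a constant K ≥ 0 such that | r(x) − ∫ r(y) κ(x,dy) | ≤ K for every x ∈ 𝒳. Define V(x) = Σ_{t=0}^{∞} α^t (κ^t r)(x), where κ^t denotes the t-step kernel (κ^0 r = r and κ^{t+1} r = ∫ (κ^t r)(y) κ(·,dy)). Then for every x ∈ 𝒳, | V(x) − r(x)/(1 − α) | ≤ K/(1 − α)². -/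
open MeasureTheory ProbabilityTheory

/-! Each application of `κ` is a sup-norm contraction, so the one-step bound
`|κ r - r| ≤ K` propagates to `|κ^(t+1) r - κ^t r| ≤ K` and hence `|κ^t r - r| ≤ t K`.
Summing against the discount weights gives
`|V - r / (1 - α)| ≤ K ∑ t * α^t = K α / (1 - α)^2 ≤ K / (1 - α)^2`. -/

theorem abs_tsum_geometric_mul_sub_le {α K : ℝ} (hα0 : 0 ≤ α) (hα1 : α < 1) {a : ℕ → ℝ}
    (ha : ∀ t, |a (t + 1) - a t| ≤ K) :
    |∑' t, α ^ t * a t - a 0 / (1 - α)| ≤ K * α / (1 - α) ^ 2 := by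
  have hlin : ∀ t : ℕ, |a t - a 0| ≤ t * K := fun t => by
    simpa [Real.dist_eq, abs_sub_comm, mul_comm] using
      dist_le_range_sum_of_dist_le (f := a) (d := fun _ => K) t
        fun _ => by simpa [Real.dist_eq, abs_sub_comm] using ha _
  have hweights : HasSum (fun t : ℕ => t * α ^ t * K) (α / (1 - α) ^ 2 * K) :=
    (hasSum_coe_mul_geometric_of_norm_lt_one (by rwa [Real.norm_of_nonneg hα0])).mul_right K
  have hterm : ∀ t : ℕ, ‖α ^ t * (a t - a 0)‖ ≤ t * α ^ t * K := fun t => by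
    rw [Real.norm_eq_abs, abs_mul, abs_of_nonneg (pow_nonneg hα0 t)]
    nlinarith [hlin t, pow_nonneg hα0 t]
  have hgeom : HasSum (fun t => α ^ t * a 0) (a 0 / (1 - α)) := by
    simpa [div_eq_inv_mul] using (hasSum_geometric_of_lt_one hα0 hα1).mul_right (a 0)
  have hsplit : ∑' t, α ^ t * a t = ∑' t, α ^ t * (a t - a 0) + a 0 / (1 - α) := by
    refine ((Summable.of_norm_bounded hweights.summable hterm).hasSum.add hgeom).tsum_eq ▸ ?_
    congr 1 with t
    ring
  rw [hsplit, add_sub_cancel_right, ← Real.norm_eq_abs]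
  exact (tsum_of_norm_bounded hweights hterm).trans_eq (by ring)

section Contraction

variable {Ω : Type*} [MeasurableSpace Ω] {μ : Measure Ω} [IsProbabilityMeasure μ]

theorem abs_integral_le_of_forall_abs_le {f : Ω → ℝ} {C : ℝ} (hf : ∀ y, |f y| ≤ C) :
    |∫ y, f y ∂μ| ≤ C := by
  simpa using norm_integral_le_of_norm_le_const (μ := μ) (Filter.Eventually.of_forall hf :
    ∀ᵐ y ∂μ, ‖f y‖ ≤ C)

theorem abs_integral_sub_integral_le {f h : Ω → ℝ} {C : ℝ} (hf : Integrable f μ)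
    (hh : Integrable h μ) (hfh : ∀ y, |f y - h y| ≤ C) :
    |∫ y, f y ∂μ - ∫ y, h y ∂μ| ≤ C := by
  rw [← integral_sub hf hh]
  exact abs_integral_le_of_forall_abs_le hfh

end Contraction

section KernelIterate

variable {𝒳 : Type*} [MeasurableSpace 𝒳] {κ : Kernel 𝒳 𝒳} {r : 𝒳 → ℝ} {g : ℕ → 𝒳 → ℝ}

theorem stronglyMeasurable_kernel_iterate (hr : Measurable r) (hg0 : ∀ x, g 0 x = r x)
    (hgsucc : ∀ t x, g (t + 1) x = ∫ y, g t y ∂(κ x)) (t : ℕ) : StronglyMeasurable (g t) := by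
  induction t with
  | zero => exact funext hg0 ▸ hr.stronglyMeasurable
  | succ t ih => exact funext (hgsucc t) ▸ ih.integral_kernel

theorem abs_kernel_iterate_le [IsMarkovKernel κ] {M : ℝ} (hbdd : ∀ x, |r x| ≤ M)
    (hg0 : ∀ x, g 0 x = r x) (hgsucc : ∀ t x, g (t + 1) x = ∫ y, g t y ∂(κ x)) (t : ℕ) (x : 𝒳) :
    |g t x| ≤ M := by
  induction t generalizing x with
  | zero => exact hg0 x ▸ hbdd x
  | succ t ih => exact hgsucc t x ▸ abs_integral_le_of_forall_abs_le ih

theorem abs_kernel_iterate_succ_sub_le [IsMarkovKernel κ] (hr : Measurable r) {M : ℝ}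
    (hbdd : ∀ x, |r x| ≤ M) {K : ℝ} (hKr : ∀ x, |r x - ∫ y, r y ∂(κ x)| ≤ K)
    (hg0 : ∀ x, g 0 x = r x) (hgsucc : ∀ t x, g (t + 1) x = ∫ y, g t y ∂(κ x)) (t : ℕ) (x : 𝒳) :
    |g (t + 1) x - g t x| ≤ K := by
  have hint : ∀ t x, Integrable (g t) (κ x) := fun t x =>
    .of_bound (stronglyMeasurable_kernel_iterate hr hg0 hgsucc t).aestronglyMeasurable M
      (Filter.Eventually.of_forall (abs_kernel_iterate_le hbdd hg0 hgsucc t))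
  induction t generalizing x with
  | zero =>
    rw [hgsucc 0 x, abs_sub_comm]
    simpa only [hg0] using hKr x
  | succ t ih =>
    rw [hgsucc (t + 1) x, hgsucc t x]
    exact abs_integral_sub_integral_le (hint _ x) (hint _ x) ih

end KernelIterate

theorem value_function_close_to_myopic_general
    {𝒳 : Type*} [MeasurableSpace 𝒳]
    (κ : Kernel 𝒳 𝒳) [IsMarkovKernel κ]
    (α : ℝ) (hα0 : 0 < α) (hα1 : α < 1)
    (r : 𝒳 → ℝ) (hr : Measurable r)
    (M : ℝ) (hbdd : ∀ x, |r x| ≤ M)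
    (K : ℝ)
    (hKr : ∀ x, |r x - ∫ y, r y ∂(κ x)| ≤ K)
    (g : ℕ → 𝒳 → ℝ)
    (hg0 : ∀ x, g 0 x = r x)
    (hgsucc : ∀ t x, g (t + 1) x = ∫ y, g t y ∂(κ x)) :
    ∀ x, |(∑' t : ℕ, α ^ t * g t x) - r x / (1 - α)| ≤ K / (1 - α) ^ 2 := by
  intro x
  have hK : 0 ≤ K := (abs_nonneg _).trans (hKr x)
  calc |∑' t, α ^ t * g t x - r x / (1 - α)| ≤ K * α / (1 - α) ^ 2 := by
        simpa only [hg0] using abs_tsum_geometric_mul_sub_le (a := (g · x)) hα0.le hα1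
          (abs_kernel_iterate_succ_sub_le hr hbdd hKr hg0 hgsucc · x)
    _ ≤ K / (1 - α) ^ 2 := by
        gcongr
        exact mul_le_of_le_one_right hK hα1.le

/-- If `r` is bounded measurable with `|r(x) − ∫ r(y) κ(x,dy)| ≤ K` for all `x`, then the value
function `V(x) = Σ_t α^t (κ^t r)(x)` satisfies `|V(x) − r(x)/(1−α)| ≤ K/(1−α)²`.
Here `g t = κ^t r` denotes the `t`-step iterate `g 0 = r`, `g (t+1) x = ∫ g t (y) κ(x,dy)`. -/
theorem value_function_close_to_myopic
    {𝒳 : Type*} [MeasurableSpace 𝒳]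
    (κ : Kernel 𝒳 𝒳) [IsMarkovKernel κ]
    (α : ℝ) (hα0 : 0 < α) (hα1 : α < 1)
    (r : 𝒳 → ℝ) (hr : Measurable r)
    (M : ℝ) (hbdd : ∀ x, |r x| ≤ M)
    (K : ℝ) (hK : 0 ≤ K)
    (hKr : ∀ x, |r x - ∫ y, r y ∂(κ x)| ≤ K)
    (g : ℕ → 𝒳 → ℝ)
    (hg0 : ∀ x, g 0 x = r x)
    (hgsucc : ∀ t x, g (t + 1) x = ∫ y, g t y ∂(κ x)) :
    ∀ x, |(∑' t : ℕ, α ^ t * g t x) - r x / (1 - α)| ≤ K / (1 - α) ^ 2 :=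
  value_function_close_to_myopic_general κ α hα0 hα1 r hr M hbdd K hKr g hg0 hgsucc
end
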